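/- arXiv:2603.18929 — 6 statements merged into one kernel-verified Lean document; each statement's English description precedes it below -/
import Mathlib

section
/- Let C and D be centrally symmetric convex bodies in ℝ^d, let α > 0, and let C₊ := C + α·D (Minkowski sum). Then for all p, x ∈ D°, one has ‖p − x‖_{(C₊)°} ≤ ‖p − x‖_{C°} + 2α. In particular, if ‖p − x‖_{C°} ≤ α then ‖p − x‖_{(C₊)°} ≤ 3α. -/
/-!
The gauge of the polar of a bounded set `S` is the support function of `S`:
`‖u‖_{S°} ≤ r` iff `⟪s, u⟫ ≤ r` for all `s ∈ S` (when `r ≥ 0`). Every point of `C + α • D` is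
`c + α • e` with `⟪c, p - x⟫ ≤ ‖p - x‖_{C°}`, and `⟪e, p - x⟫ = ⟪e, p⟫ + ⟪-e, x⟫ ≤ 2`
because `D` is symmetric and `p, x ∈ D°`.
-/

open Set MeasureTheory Metric
open scoped Pointwise RealInnerProductSpace ENNReal

noncomputable section

abbrev Euc (d : ℕ) := EuclideanSpace ℝ (Fin d)

/-- A convex body: a compact convex set with nonempty interior. -/
def IsConvexBody {d : ℕ} (K : Set (Euc d)) : Prop :=
  IsCompact K ∧ Convex ℝ K ∧ (interior K).Nonempty

/-- The polar of a set. -/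
def polarSet {d : ℕ} (S : Set (Euc d)) : Set (Euc d) :=
  {y | ∀ x ∈ S, ⟪x, y⟫ ≤ 1}

/-- The Hilbert distance with respect to the body `K`. -/
def hilbertDist {d : ℕ} (K : Set (Euc d)) (x y : Euc d) : ℝ :=
  -(1 / 2) * Real.log ((1 - gauge ((fun k => k - x) '' K) (y - x)) *
    (1 - gauge ((fun k => k - y) '' K) (x - y)))

/-- The Hilbert ball of radius `r` centered at `x`. -/
def hilbertBall {d : ℕ} (K : Set (Euc d)) (x : Euc d) (r : ℝ) : Set (Euc d) :=
  {y ∈ interior K | hilbertDist K x y ≤ r}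

/-- The Hilbert covering number of `U` at scale `α` in the geometry induced by `K`. -/
def hilbertCov {d : ℕ} (K U : Set (Euc d)) (α : ℝ) : ℕ :=
  sInf {m : ℕ | ∃ x : Fin m → Euc d, (∀ i, x i ∈ interior K) ∧
    U ⊆ ⋃ i, hilbertBall K (x i) α}

/-- The translative covering number of `U` by translates of `α • D`. -/
def transCov {d : ℕ} (D U : Set (Euc d)) (α : ℝ) : ℕ :=
  sInf {m : ℕ | ∃ x : Fin m → Euc d, U ⊆ ⋃ i, x i +ᵥ α • D}

/-- The Hilbert `α`-expansion of `G` in `K`. -/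
def hilbertExpand {d : ℕ} (K G : Set (Euc d)) (α : ℝ) : Set (Euc d) :=
  {x ∈ interior K | sInf (hilbertDist K x '' G) ≤ α}

/-- The Lebesgue volume of the Euclidean unit ball in `ℝ^d`. -/
def ωd (d : ℕ) : ℝ := (volume (ball (0 : Euc d) 1)).toReal

/-- The Hilbert Finsler unit ball at `y` in the geometry induced by `K`. -/
def finslerBall {d : ℕ} (K : Set (Euc d)) (y : Euc d) : Set (Euc d) :=
  {v | gauge ((fun k => k - y) '' K) v + gauge ((fun k => k - y) '' K) (-v) ≤ 2}

/-- The Hilbert Holmes–Thompson volume of `U` in the geometry induced by `K`. -/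
def volH {d : ℕ} (K U : Set (Euc d)) : ℝ :=
  (1 / ωd d) * ∫ y in U, (volume (polarSet (finslerBall K y))).toReal

/-- The recentered Macbeath region `A(x) := (K ∩ (2x − K)) − x`. -/
def macbeathA {d : ℕ} (K : Set (Euc d)) (x : Euc d) : Set (Euc d) :=
  (fun k => k - x) '' (K ∩ ((fun k => (2 : ℝ) • x - k) '' K))

section PolarGauge

variable {d : ℕ}

theorem mem_smul_polarSet_iff {S : Set (Euc d)} {u : Euc d} {t : ℝ} (ht : 0 < t) :
    u ∈ t • polarSet S ↔ ∀ s ∈ S, ⟪s, u⟫ ≤ t := by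
  rw [mem_smul_set_iff_inv_smul_mem₀ ht.ne']
  refine forall₂_congr fun s _ => ?_
  rw [real_inner_smul_right, inv_mul_le_iff₀ ht, mul_one]

theorem polarSet_mem_nhds_zero {S : Set (Euc d)} (hS : Bornology.IsBounded S) :
    polarSet S ∈ nhds 0 := by
  obtain ⟨R, hR⟩ := isBounded_iff_forall_norm_le.1 hS
  have hR₁ : 0 < |R| + 1 := by positivity
  refine Filter.mem_of_superset (Metric.ball_mem_nhds 0 (inv_pos.2 hR₁)) fun y hy s hs => ?_
  rw [mem_ball_zero_iff] at hy
  calc ⟪s, y⟫ ≤ ‖s‖ * ‖y‖ := real_inner_le_norm s y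
    _ ≤ (|R| + 1) * (|R| + 1)⁻¹ :=
      mul_le_mul (by linarith [hR s hs, le_abs_self R]) hy.le (norm_nonneg y) hR₁.le
    _ = 1 := mul_inv_cancel₀ hR₁.ne'

theorem gauge_polarSet_le_of_forall_inner_le {S : Set (Euc d)} {u : Euc d} {r : ℝ}
    (hr : 0 ≤ r) (h : ∀ s ∈ S, ⟪s, u⟫ ≤ r) : gauge (polarSet S) u ≤ r :=
  le_of_forall_gt_imp_ge_of_dense fun t ht =>
    have ht₀ : 0 < t := hr.trans_lt ht
    gauge_le_of_mem ht₀.le <| (mem_smul_polarSet_iff ht₀).2 fun s hs => (h s hs).trans ht.le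

theorem inner_le_gauge_polarSet {S : Set (Euc d)} (hS : Bornology.IsBounded S) (u : Euc d)
    {s : Euc d} (hs : s ∈ S) : ⟪s, u⟫ ≤ gauge (polarSet S) u :=
  le_of_forall_gt_imp_ge_of_dense fun t ht => by
    obtain ⟨b, hb₀, hbt, hub⟩ :=
      exists_lt_of_gauge_lt (absorbent_nhds_zero (polarSet_mem_nhds_zero hS)) ht
    exact ((mem_smul_polarSet_iff hb₀).1 hub s hs).trans hbt.le

theorem inner_sub_le_two_of_mem_polarSet {D : Set (Euc d)} (hDs : D = -D) {p x e : Euc d}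
    (hp : p ∈ polarSet D) (hx : x ∈ polarSet D) (he : e ∈ D) : ⟪e, p - x⟫ ≤ 2 := by
  have hne : -e ∈ D := by rw [hDs, mem_neg, neg_neg]; exact he
  have h₁ := hp e he
  have h₂ := hx (-e) hne
  rw [inner_neg_left] at h₂
  rw [inner_sub_right]
  linarith

end PolarGauge

theorem mink_polar_expansion_stability_general {d : ℕ} (C D : Set (Euc d))
    (hC : IsConvexBody C)
    (hDs : D = -D) (α : ℝ) (hα : 0 < α)
    (p x : Euc d) (hp : p ∈ polarSet D) (hx : x ∈ polarSet D) :
    gauge (polarSet (C + α • D)) (p - x) ≤ gauge (polarSet C) (p - x) + 2 * α ∧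
    (gauge (polarSet C) (p - x) ≤ α →
      gauge (polarSet (C + α • D)) (p - x) ≤ 3 * α) := by
  have main : gauge (polarSet (C + α • D)) (p - x) ≤ gauge (polarSet C) (p - x) + 2 * α := by
    have hg : 0 ≤ gauge (polarSet C) (p - x) := gauge_nonneg _
    refine gauge_polarSet_le_of_forall_inner_le (by linarith) ?_
    rintro _ ⟨c, hc, _, ⟨e, he, rfl⟩, rfl⟩
    have hc' := inner_le_gauge_polarSet hC.1.isBounded (p - x) hc
    have he' := inner_sub_le_two_of_mem_polarSet hDs hp hx he
    rw [inner_add_left, real_inner_smul_left]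
    nlinarith
  exact ⟨main, fun h => by linarith⟩

/-- Minkowski polarity-expansion stability. -/
theorem mink_polar_expansion_stability {d : ℕ} (C D : Set (Euc d))
    (hC : IsConvexBody C) (hD : IsConvexBody D)
    (hCs : C = -C) (hDs : D = -D) (α : ℝ) (hα : 0 < α)
    (p x : Euc d) (hp : p ∈ polarSet D) (hx : x ∈ polarSet D) :
    gauge (polarSet (C + α • D)) (p - x) ≤ gauge (polarSet C) (p - x) + 2 * α ∧
    (gauge (polarSet C) (p - x) ≤ α →
      gauge (polarSet (C + α • D)) (p - x) ≤ 3 * α) :=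
  mink_polar_expansion_stability_general C D hC hDs α hα p x hp hx
end
end

section
/- Let G and K be convex bodies in ℝ^d with 0 ∈ int(G) and G ⊆ int(K), let α > 0, and let G₊ := {x ∈ int(K) : inf_{g∈G} d_H^K(x,g) ≤ α} be the Hilbert α-expansion of G in K. Then for all p, x ∈ K°, one has d_H^{(G₊)°}(p, x) ≤ d_H^{G°}(p, x) + 2α. In particular, if d_H^{G°}(p,x) ≤ α then d_H^{(G₊)°}(p,x) ≤ 3α. (Here G₊ ⊆ int(K) with closure a convex body, so K° ⊆ int((G₊)°) and the left-hand side is well defined.) -/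
open Set MeasureTheory Metric
open scoped Pointwise RealInnerProductSpace ENNReal

noncomputable section

/-! For `w ∈ G₊` and `β > α` pick `g ∈ G` with `d_H^K(w, g) < β`. Bounding the Funk gauges of the
chord through `w` and `g` by the functionals `p, x ∈ K°` gives the cross-ratio inequality
`e^{-2β} (1 - ⟪g, x⟫) (1 - ⟪w, p⟫) ≤ (1 - ⟪w, x⟫) (1 - ⟪g, p⟫)`, and the Funk estimate in `G°`
turns it into `e^{-2β} (1 - a) (1 - ⟪w, p⟫) ≤ 1 - ⟪w, x⟫`, with `a` the Funk gauge of `x` seen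
from `p` in `G°`. Hence `p + c⁻¹ (x - p) ∈ (G₊)°` for `c = 1 - e^{-2β} (1 - a)`: both factors
`1 - gauge` of the Hilbert distance in `(G₊)°` are at least `e^{-2β}` times those in `G°`, so the
distance grows by at most `2β`; then let `β ↓ α`. -/

section Gauge

variable {E : Type*}

lemma gauge_le_gauge_of_subset [AddCommGroup E] [Module ℝ E] {s t : Set E} (hst : s ⊆ t)
    {v : E} (hv : v ∈ s) : gauge t v ≤ gauge s v :=
  csInf_le_csInf ⟨0, fun _ hr => hr.1.le⟩ ⟨1, one_pos, by rwa [one_smul]⟩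
    fun _ ⟨hr, hvr⟩ => ⟨hr, smul_set_mono hst hvr⟩

lemma inner_le_mul_gauge [NormedAddCommGroup E] [InnerProductSpace ℝ E] {s : Set E} {u v : E}
    {c : ℝ} (hc : 0 ≤ c) (hs : ∀ z ∈ s, ⟪z, u⟫ ≤ c) (hv : v ∈ s) :
    ⟪v, u⟫ ≤ c * gauge s v := by
  have hbound : ∀ r ∈ {r : ℝ | 0 < r ∧ v ∈ r • s}, ⟪v, u⟫ ≤ c * r := by
    rintro r ⟨hr, z, hz, rfl⟩
    rw [real_inner_smul_left]
    nlinarith [hs z hz]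
  have hv₁ : (1 : ℝ) ∈ {r : ℝ | 0 < r ∧ v ∈ r • s} := ⟨one_pos, by rwa [one_smul]⟩
  rcases hc.eq_or_lt with rfl | hc
  · simpa using hbound 1 hv₁
  · rw [← div_le_iff₀' hc]
    exact le_csInf ⟨1, hv₁⟩ fun r hr => (div_le_iff₀' hc).2 (hbound r hr)

lemma inner_lt_one_of_mem_interior [NormedAddCommGroup E] [InnerProductSpace ℝ E] {K : Set E}
    {x y : E} (hy : y ∈ interior K) (hx : ∀ k ∈ K, ⟪k, x⟫ ≤ 1) : ⟪y, x⟫ < 1 := by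
  rcases eq_or_ne x 0 with rfl | hx0
  · simp
  set f := innerSL ℝ x
  have hf : f ≠ 0 := fun h => hx0 (by simpa [f] using congrArg (fun φ => φ x) h)
  have hK : K ⊆ f ⁻¹' Iic 1 := fun k hk => by simpa [f, real_inner_comm] using hx k hk
  have hy' := interior_mono hK hy
  rw [← (f.isOpenMap_of_ne_zero hf).preimage_interior_eq_interior_preimage f.continuous,
    interior_Iic] at hy'
  simpa [f, real_inner_comm] using hy'

end Gauge

section Funk

variable {E : Type*} [NormedAddCommGroup E] [InnerProductSpace ℝ E] {S T : Set E} {p x u : E}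

/-- `1 - funkGauge S p x = |xb| / |pb|`, where `b` is the point at which the ray from `p` through
`x` leaves `S`; the Funk distance from `p` to `x` is minus its logarithm. -/
def funkGauge (S : Set E) (p x : E) : ℝ := gauge ((fun k => k - p) '' S) (x - p)

lemma funkGauge_nonneg : 0 ≤ funkGauge S p x := gauge_nonneg _

lemma funkGauge_self : funkGauge S p p = 0 := by simp [funkGauge]

lemma funkGauge_le_one (hx : x ∈ S) : funkGauge S p x ≤ 1 := gauge_le_one_of_mem ⟨x, hx, rfl⟩

lemma funkGauge_lt_one (hx : x ∈ interior S) : funkGauge S p x < 1 :=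
  (gauge_le_gauge_of_subset (image_mono interior_subset) ⟨x, hx, rfl⟩).trans_lt
    (gauge_lt_one_of_mem_of_isOpen (isOpenMap_sub_right p _ isOpen_interior) ⟨x, hx, rfl⟩)

lemma funkGauge_antitone (hST : S ⊆ T) (hx : x ∈ S) : funkGauge T p x ≤ funkGauge S p x :=
  gauge_le_gauge_of_subset (image_mono hST) ⟨x, hx, rfl⟩

lemma funkGauge_le_of_mem {c : ℝ} (hc : 0 < c) (h : p + c⁻¹ • (x - p) ∈ S) :
    funkGauge S p x ≤ c :=
  gauge_le_of_mem hc.le ⟨_, ⟨_, h, rfl⟩, by simp [hc.ne']⟩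

lemma one_sub_funkGauge_mul_le (hu : ∀ k ∈ S, ⟪k, u⟫ ≤ 1) (hp : p ∈ S) (hx : x ∈ S) :
    (1 - funkGauge S p x) * (1 - ⟪p, u⟫) ≤ 1 - ⟪x, u⟫ := by
  have h := inner_le_mul_gauge (s := (fun k => k - p) '' S) (u := u) (sub_nonneg.2 (hu p hp))
    (by rintro _ ⟨k, hk, rfl⟩; rw [inner_sub_left]; linarith [hu k hk]) ⟨x, hx, rfl⟩
  rw [inner_sub_left] at h
  have : (1 - funkGauge S p x) * (1 - ⟪p, u⟫) = 1 - ⟪p, u⟫ - (1 - ⟪p, u⟫) * funkGauge S p x := by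
    ring
  rw [this]
  unfold funkGauge
  linarith

end Funk

section Hilbert

variable {d : ℕ}

lemma polarSet_anti {S T : Set (Euc d)} (hST : S ⊆ T) : polarSet T ⊆ polarSet S :=
  fun _ hy k hk => hy k (hST hk)

lemma funkGauge_polarSet_le {S : Set (Euc d)} {p x : Euc d} {c : ℝ} (hc : 0 < c)
    (h : ∀ w ∈ S, ⟪w, x - p⟫ ≤ c * (1 - ⟪w, p⟫)) : funkGauge (polarSet S) p x ≤ c := by
  refine funkGauge_le_of_mem hc fun w hw => ?_
  have : c⁻¹ * ⟪w, x - p⟫ ≤ 1 - ⟪w, p⟫ := by rw [inv_mul_le_iff₀ hc]; exact h w hw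
  rw [inner_add_right, real_inner_smul_right]
  linarith

lemma hilbertDist_eq (K : Set (Euc d)) (x y : Euc d) :
    hilbertDist K x y = -(1 / 2) * Real.log ((1 - funkGauge K x y) * (1 - funkGauge K y x)) :=
  rfl

variable {K G : Set (Euc d)} {α β : ℝ}

lemma exp_neg_two_mul_hilbertDist {x y : Euc d} (hx : x ∈ interior K) (hy : y ∈ interior K) :
    Real.exp (-(2 * hilbertDist K x y)) = (1 - funkGauge K x y) * (1 - funkGauge K y x) := by
  have hpos : 0 < (1 - funkGauge K x y) * (1 - funkGauge K y x) :=
    mul_pos (sub_pos.2 (funkGauge_lt_one hy)) (sub_pos.2 (funkGauge_lt_one hx))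
  rw [hilbertDist_eq, show ∀ L : ℝ, -(2 * (-(1 / 2) * L)) = L by intro; ring, Real.exp_log hpos]

lemma hilbertDist_nonneg {x y : Euc d} (hx : x ∈ interior K) (hy : y ∈ interior K) :
    0 ≤ hilbertDist K x y := by
  have h : Real.exp (-(2 * hilbertDist K x y)) ≤ 1 := by
    rw [exp_neg_two_mul_hilbertDist hx hy]
    exact mul_le_one₀ (by linarith [funkGauge_nonneg (S := K) (p := x) (x := y)])
      (sub_nonneg.2 (funkGauge_le_one (interior_subset hx)))
      (by linarith [funkGauge_nonneg (S := K) (p := y) (x := x)])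
  linarith [Real.exp_le_one_iff.1 h]

lemma hilbertDist_self (x : Euc d) : hilbertDist K x x = 0 := by
  simp [hilbertDist_eq, funkGauge_self]

lemma subset_hilbertExpand (hGK : G ⊆ interior K) (hα : 0 ≤ α) : G ⊆ hilbertExpand K G α := by
  intro g hg
  have hbdd : BddBelow (hilbertDist K g '' G) := ⟨0, by
    rintro _ ⟨g', hg', rfl⟩
    exact hilbertDist_nonneg (hGK hg) (hGK hg')⟩
  refine ⟨hGK hg, (csInf_le hbdd ⟨g, hg, rfl⟩).trans ?_⟩
  rwa [hilbertDist_self]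

lemma exists_hilbertDist_lt_of_mem_hilbertExpand (hG : G.Nonempty) {w : Euc d}
    (hw : w ∈ hilbertExpand K G α) (hαβ : α < β) : ∃ g ∈ G, hilbertDist K w g < β := by
  obtain ⟨_, ⟨g, hg, rfl⟩, h⟩ := exists_lt_of_csInf_lt (hG.image _) (hw.2.trans_lt hαβ)
  exact ⟨g, hg, h⟩

lemma exp_neg_two_mul_hilbertDist_mul_le {y g p x : Euc d} (hy : y ∈ interior K)
    (hg : g ∈ interior K) (hp : p ∈ polarSet K) (hx : x ∈ polarSet K) :
    Real.exp (-(2 * hilbertDist K y g)) * ((1 - ⟪g, x⟫) * (1 - ⟪y, p⟫)) ≤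
      (1 - ⟪y, x⟫) * (1 - ⟪g, p⟫) := by
  have hgy := one_sub_funkGauge_mul_le hx (interior_subset hg) (interior_subset hy)
  have hyg := one_sub_funkGauge_mul_le hp (interior_subset hy) (interior_subset hg)
  have hyg₀ : 0 ≤ (1 - funkGauge K y g) * (1 - ⟪y, p⟫) :=
    mul_nonneg (sub_nonneg.2 (funkGauge_le_one (interior_subset hg)))
      (sub_nonneg.2 (hp y (interior_subset hy)))
  rw [exp_neg_two_mul_hilbertDist hy hg]
  calc _ = ((1 - funkGauge K g y) * (1 - ⟪g, x⟫)) * ((1 - funkGauge K y g) * (1 - ⟪y, p⟫)) := by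
        ring
    _ ≤ _ := mul_le_mul hgy hyg hyg₀ (sub_nonneg.2 (hx y (interior_subset hy)))

lemma exp_mul_one_sub_funkGauge_polarSet_mul_le (hG : G.Nonempty) (hGK : G ⊆ interior K)
    (hαβ : α < β) {w p x : Euc d} (hw : w ∈ hilbertExpand K G α) (hp : p ∈ polarSet K)
    (hx : x ∈ polarSet K) :
    Real.exp (-(2 * β)) * (1 - funkGauge (polarSet G) p x) * (1 - ⟪w, p⟫) ≤ 1 - ⟪w, x⟫ := by
  obtain ⟨g, hg, hwg⟩ := exists_hilbertDist_lt_of_mem_hilbertExpand hG hw hαβ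
  have hpolar : polarSet K ⊆ polarSet G := polarSet_anti fun _ hg => interior_subset (hGK hg)
  have hGfunk : (1 - funkGauge (polarSet G) p x) * (1 - ⟪p, g⟫) ≤ 1 - ⟪x, g⟫ :=
    one_sub_funkGauge_mul_le (fun z hz => real_inner_comm g z ▸ hz g hg) (hpolar hp) (hpolar hx)
  rw [real_inner_comm g p, real_inner_comm g x] at hGfunk
  have hcross := exp_neg_two_mul_hilbertDist_mul_le hw.1 (hGK hg) hp hx
  have hexp : Real.exp (-(2 * β)) ≤ Real.exp (-(2 * hilbertDist K w g)) :=
    Real.exp_le_exp.2 (by linarith)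
  have hgp : 0 < 1 - ⟪g, p⟫ := sub_pos.2 (inner_lt_one_of_mem_interior (hGK hg) hp)
  have hwp : 0 ≤ 1 - ⟪w, p⟫ := sub_nonneg.2 (hp w (interior_subset hw.1))
  have ha : 0 ≤ (1 - funkGauge (polarSet G) p x) * (1 - ⟪g, p⟫) :=
    mul_nonneg (sub_nonneg.2 (funkGauge_le_one (hpolar hx))) hgp.le
  refine le_of_mul_le_mul_right ?_ hgp
  calc _ = Real.exp (-(2 * β)) * ((1 - funkGauge (polarSet G) p x) * (1 - ⟪g, p⟫)) *
        (1 - ⟪w, p⟫) := by ring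
    _ ≤ Real.exp (-(2 * hilbertDist K w g)) * (1 - ⟪g, x⟫) * (1 - ⟪w, p⟫) := by gcongr
    _ ≤ _ := by linarith

lemma exp_mul_one_sub_funkGauge_polarSet_le (hG : G.Nonempty) (hGK : G ⊆ interior K)
    (hβ : 0 < β) (hαβ : α < β) {p x : Euc d} (hp : p ∈ polarSet K) (hx : x ∈ polarSet K) :
    Real.exp (-(2 * β)) * (1 - funkGauge (polarSet G) p x) ≤
      1 - funkGauge (polarSet (hilbertExpand K G α)) p x := by
  set e := Real.exp (-(2 * β))
  set a := funkGauge (polarSet G) p x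
  have he : e < 1 := Real.exp_lt_one_iff.2 (by linarith)
  have hc : 0 < 1 - e * (1 - a) := by
    nlinarith [Real.exp_pos (-(2 * β)), funkGauge_nonneg (S := polarSet G) (p := p) (x := x)]
  suffices funkGauge (polarSet (hilbertExpand K G α)) p x ≤ 1 - e * (1 - a) by linarith
  refine funkGauge_polarSet_le hc fun w hw => ?_
  have := exp_mul_one_sub_funkGauge_polarSet_mul_le hG hGK hαβ hw hp hx
  rw [inner_sub_right]
  linarith

lemma hilbertDist_polarSet_hilbertExpand_le (hG : G.Nonempty) (hGK : G ⊆ interior K)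
    (hα : 0 ≤ α) (hαβ : α < β) {p x : Euc d} (hp : p ∈ polarSet K) (hx : x ∈ polarSet K) :
    hilbertDist (polarSet (hilbertExpand K G α)) p x ≤ hilbertDist (polarSet G) p x + 2 * β := by
  have hβ : 0 < β := by linarith
  have hExpG : polarSet (hilbertExpand K G α) ⊆ polarSet G :=
    polarSet_anti (subset_hilbertExpand hGK hα)
  have hKExp : polarSet K ⊆ polarSet (hilbertExpand K G α) :=
    polarSet_anti fun _ hw => interior_subset hw.1
  have ha := funkGauge_antitone (p := p) hExpG (hKExp hx)
  have hb := funkGauge_antitone (p := x) hExpG (hKExp hp)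
  have ha₁ := funkGauge_le_one (p := p) (hKExp hx)
  have hb₁ := funkGauge_le_one (p := x) (hKExp hp)
  have hea := exp_mul_one_sub_funkGauge_polarSet_le hG hGK hβ hαβ hp hx
  have heb := exp_mul_one_sub_funkGauge_polarSet_le hG hGK hβ hαβ hx hp
  rw [hilbertDist_eq, hilbertDist_eq]
  set e := Real.exp (-(2 * β))
  set a := funkGauge (polarSet G) p x
  set b := funkGauge (polarSet G) x p
  set a' := funkGauge (polarSet (hilbertExpand K G α)) p x
  set b' := funkGauge (polarSet (hilbertExpand K G α)) x p
  rcases (mul_nonneg (sub_nonneg.2 (ha.trans ha₁)) (sub_nonneg.2 (hb.trans hb₁))).eq_or_lt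
    with h0 | hpos
  · -- `log 0 = 0`: both distances take the junk value `0`
    have h0' : (1 - a') * (1 - b') = 0 := by
      rcases mul_eq_zero.1 h0.symm with h | h
      · simp [show a' = 1 by linarith]
      · simp [show b' = 1 by linarith]
    rw [← h0, h0']
    simp only [Real.log_zero, mul_zero, zero_add]
    positivity
  · have hprod : Real.exp (-(4 * β)) * ((1 - a) * (1 - b)) ≤ (1 - a') * (1 - b') := by
      calc _ = e * (1 - a) * (e * (1 - b)) := by
            rw [show -(4 * β) = -(2 * β) + -(2 * β) by ring, Real.exp_add]; ring
        _ ≤ _ := mul_le_mul hea heb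
            (mul_nonneg (Real.exp_pos _).le (sub_nonneg.2 (hb.trans hb₁))) (by linarith)
    have hlog := Real.log_le_log (by positivity) hprod
    rw [Real.log_mul (Real.exp_pos _).ne' hpos.ne', Real.log_exp] at hlog
    linarith

end Hilbert

theorem hilbert_polar_expansion_stability_general {d : ℕ} (G K : Set (Euc d))
    (hG : IsConvexBody G) (hGK : G ⊆ interior K)
    (α : ℝ) (hα : 0 < α) (p x : Euc d)
    (hp : p ∈ polarSet K) (hx : x ∈ polarSet K) :
    hilbertDist (polarSet (hilbertExpand K G α)) p x ≤
        hilbertDist (polarSet G) p x + 2 * α ∧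
    (hilbertDist (polarSet G) p x ≤ α →
      hilbertDist (polarSet (hilbertExpand K G α)) p x ≤ 3 * α) := by
  have hGne : G.Nonempty := hG.2.2.mono interior_subset
  have hgap : hilbertDist (polarSet (hilbertExpand K G α)) p x - hilbertDist (polarSet G) p x ≤
      2 * α := le_of_forall_gt_imp_ge_of_dense fun c hc => by
    linarith [hilbertDist_polarSet_hilbertExpand_le hGne hGK hα.le
      (show α < c / 2 by linarith) hp hx]
  exact ⟨by linarith, fun h => by linarith⟩

/-- Hilbert polarity-expansion stability. -/
theorem hilbert_polar_expansion_stability {d : ℕ} (G K : Set (Euc d))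
    (hG : IsConvexBody G) (hK : IsConvexBody K)
    (h0 : (0 : Euc d) ∈ interior G) (hGK : G ⊆ interior K)
    (α : ℝ) (hα : 0 < α) (p x : Euc d)
    (hp : p ∈ polarSet K) (hx : x ∈ polarSet K) :
    hilbertDist (polarSet (hilbertExpand K G α)) p x ≤
        hilbertDist (polarSet G) p x + 2 * α ∧
    (hilbertDist (polarSet G) p x ≤ α →
      hilbertDist (polarSet (hilbertExpand K G α)) p x ≤ 3 * α) :=
  hilbert_polar_expansion_stability_general G K hG hGK α hα p x hp hx
end
end

section
/- There exists an absolute constant c ≥ 1 such that for every dimension d ≥ 2, every convex body K ⊆ ℝ^d, all radii 0 < r ≤ r′ ≤ 4, and every set U ⊆ int(K), one has N_K(U, r) ≤ c^{d} · (r′/r)^d · N_K(U, r′), where N_K(U,·) denotes the Hilbert covering number of U with respect to K. -/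
open Set MeasureTheory Metric
open scoped Pointwise RealInnerProductSpace ENNReal

noncomputable section

/-!
Hilbert balls are comparable with dilates of the Macbeath region `M(x) = (K - x) ∩ (x - K)`:
the ball of radius `r` about `x` contains `x + ((1 - e^{-2r}) / 2) • M(x)` and lies in
`x + (e^{2r} - 1) • M(x)`, and `e^{-2r'} • M(x) ⊆ M(y)` whenever `d_H(x, y) ≤ r'`.
Hence, with `ε = e^{-2r'} (1 - e^{-2r}) / 2`, a maximal set of points of `B_H(z, r')` whose
differences avoid `ε • M(z)` is a set of centres of `r`-balls covering `B_H(z, r')`; the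
translates of `(ε / 2) • M(z)` about these points are disjoint and lie in a dilate of `M(z)`,
so comparing volumes bounds their number by `((4 e^{6r'} + 1) r'/r)^d`. Refining an optimal
`r'`-cover of `U` ball by ball gives the theorem with `c = 4 e^{24} + 1`.
-/

section Packing

open Finset

variable {E : Type*} [NormedAddCommGroup E] [NormedSpace ℝ E] [FiniteDimensional ℝ E]
  [MeasurableSpace E] [BorelSpace E] {A : Set E}

lemma card_le_of_pairwise_sub_notMem_smul (hAc : Convex ℝ A) (hAneg : ∀ a ∈ A, -a ∈ A)
    (hAb : Bornology.IsBounded A) (hAi : (interior A).Nonempty) {P : Finset E} {x : E}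
    {t ε : ℝ} (ht : 0 ≤ t) (hε : 0 < ε) (hPx : ∀ p ∈ P, p - x ∈ t • A)
    (hP : (P : Set E).Pairwise fun p q => p - q ∉ ε • A) :
    (#P : ℝ) ≤ (2 * t / ε + 1) ^ Module.finrank ℝ E := by
  set μ : Measure E := Measure.addHaar
  set n := Module.finrank ℝ E
  have hμA : μ A ≠ 0 := (Measure.measure_pos_of_nonempty_interior μ hAi).ne'
  have hμA' : μ A ≠ ⊤ := hAb.measure_lt_top.ne
  have hvol : ∀ c : ℝ, 0 ≤ c → ∀ v : E,
      μ (v +ᵥ c • A) = ENNReal.ofReal (c ^ n) * μ A := by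
    intro c hc v
    rw [measure_vadd, Measure.addHaar_smul, abs_of_nonneg (by positivity)]
  have hdisj : (P : Set E).PairwiseDisjoint fun p => p +ᵥ (ε / 2) • A := by
    intro p hp q hq hpq
    refine Set.disjoint_left.2 ?_
    rintro _ ⟨_, ⟨a, ha, rfl⟩, rfl⟩ ⟨_, ⟨b, hb, rfl⟩, hba⟩
    refine hP hp hq hpq ⟨(1 / 2 : ℝ) • b + (1 / 2 : ℝ) • -a,
      hAc hb (hAneg a ha) (by norm_num) (by norm_num) (by norm_num), ?_⟩
    simp only [vadd_eq_add] at hba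
    linear_combination (norm := module) hba
  have hsub : ∀ p ∈ P, p +ᵥ (ε / 2) • A ⊆ x +ᵥ (t + ε / 2) • A := by
    rintro p hp _ ⟨_, ⟨a, ha, rfl⟩, rfl⟩
    refine ⟨(p - x) + (ε / 2) • a, ?_, by simp only [vadd_eq_add]; abel⟩
    rw [hAc.add_smul ht (by positivity)]
    exact Set.add_mem_add (hPx p hp) (Set.smul_mem_smul_set ha)
  have hμ : (#P : ℝ≥0∞) * ENNReal.ofReal ((ε / 2) ^ n) * μ A ≤
      ENNReal.ofReal ((t + ε / 2) ^ n) * μ A := by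
    calc (#P : ℝ≥0∞) * ENNReal.ofReal ((ε / 2) ^ n) * μ A
        = μ (⋃ p ∈ P, p +ᵥ (ε / 2) • A) := by
          rw [measure_biUnion_finset₀ (fun p hp q hq hpq => (hdisj hp hq hpq).aedisjoint)
            (fun p _ => ((hAc.smul _).vadd p).nullMeasurableSet _),
            sum_congr rfl (fun p _ => hvol _ (by positivity) p), sum_const,
            nsmul_eq_mul, mul_assoc]
      _ ≤ μ (x +ᵥ (t + ε / 2) • A) := measure_mono (Set.iUnion₂_subset hsub)
      _ = ENNReal.ofReal ((t + ε / 2) ^ n) * μ A := hvol _ (by positivity) x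
  have hreal : (#P : ℝ) * (ε / 2) ^ n ≤ (t + ε / 2) ^ n := by
    have := ENNReal.toReal_mono ENNReal.ofReal_ne_top
      ((ENNReal.mul_le_mul_iff_left hμA hμA').1 hμ)
    rwa [ENNReal.toReal_mul, ENNReal.toReal_natCast, ENNReal.toReal_ofReal (by positivity),
      ENNReal.toReal_ofReal (by positivity)] at this
  calc (#P : ℝ) = #P * (ε / 2) ^ n / (ε / 2) ^ n := by field_simp
    _ ≤ (t + ε / 2) ^ n / (ε / 2) ^ n := by gcongr
    _ = (2 * t / ε + 1) ^ n := by rw [← div_pow]; congr 1; field_simp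

lemma exists_finset_subset_forall_sub_mem_smul (hAc : Convex ℝ A) (hAneg : ∀ a ∈ A, -a ∈ A)
    (hA0 : (0 : E) ∈ A) (hAb : Bornology.IsBounded A) (hAi : (interior A).Nonempty)
    {S : Set E} {x : E} {t ε : ℝ} (ht : 0 ≤ t) (hε : 0 < ε)
    (hSx : ∀ y ∈ S, y - x ∈ t • A) :
    ∃ P : Finset E, ↑P ⊆ S ∧ (∀ y ∈ S, ∃ p ∈ P, y - p ∈ ε • A) ∧
      (#P : ℝ) ≤ (2 * t / ε + 1) ^ Module.finrank ℝ E := by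
  classical
  let IsPacking (P : Finset E) : Prop :=
    ↑P ⊆ S ∧ (P : Set E).Pairwise fun p q => p - q ∉ ε • A
  have hcard : ∀ P, IsPacking P → (#P : ℝ) ≤ (2 * t / ε + 1) ^ Module.finrank ℝ E :=
    fun P hP => card_le_of_pairwise_sub_notMem_smul hAc hAneg hAb hAi ht hε
      (fun p hp => hSx p (hP.1 hp)) hP.2
  suffices ∃ P, IsPacking P ∧ ∀ y ∈ S, ∃ p ∈ P, y - p ∈ ε • A by
    obtain ⟨P, hP, hPS⟩ := this
    exact ⟨P, hP.1, hPS, hcard P hP⟩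
  -- otherwise packings of every size could be built greedily
  by_contra! hmax
  have hgrow : ∀ m : ℕ, ∃ P, IsPacking P ∧ #P = m := by
    intro m
    induction m with
    | zero => exact ⟨∅, by simp [IsPacking], rfl⟩
    | succ m ih =>
      obtain ⟨P, hP, rfl⟩ := ih
      obtain ⟨y, hyS, hy⟩ := hmax P hP
      have hyP : y ∉ P := fun hyP => hy y hyP (by simpa using Set.zero_mem_smul_set hA0)
      refine ⟨insert y P, ⟨?_, ?_⟩, card_insert_of_notMem hyP⟩
      · rw [coe_insert]
        exact Set.insert_subset hyS hP.1
      · rw [coe_insert]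
        refine hP.2.insert fun p hp _ => ⟨hy p hp, fun h => hy p hp ?_⟩
        obtain ⟨a, ha, hpy⟩ := h
        exact ⟨-a, hAneg a ha, by simp only [smul_neg] at hpy ⊢; rw [hpy, neg_sub]⟩
  obtain ⟨P, hP, hPcard⟩ := hgrow (⌊(2 * t / ε + 1) ^ Module.finrank ℝ E⌋₊ + 1)
  have := hcard P hP
  rw [hPcard, Nat.cast_add, Nat.cast_one] at this
  linarith [Nat.lt_floor_add_one ((2 * t / ε + 1) ^ Module.finrank ℝ E)]

end Packing

lemma mem_smul_of_gauge_le {E : Type*} [AddCommGroup E] [Module ℝ E] [TopologicalSpace E]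
    [IsTopologicalAddGroup E] [ContinuousSMul ℝ E] {s : Set E} (hs : Convex ℝ s)
    (hcl : IsClosed s) (hs₀ : s ∈ nhds 0) {x : E} {a : ℝ} (ha : 0 < a) (h : gauge s x ≤ a) :
    x ∈ a • s := by
  rw [mem_smul_set_iff_inv_smul_mem₀ ha.ne', ← hcl.closure_eq]
  refine mem_closure_of_gauge_le_one hs (mem_of_mem_nhds hs₀) (absorbent_nhds_zero hs₀) ?_
  rw [gauge_smul_of_nonneg (inv_nonneg.2 ha.le), smul_eq_mul, inv_mul_le_iff₀ ha, mul_one]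
  exact h

section Translate

variable {E : Type*} [AddCommGroup E] {K : Set E} {x y : E}

lemma image_sub_const_eq_preimage (K : Set E) (x : E) :
    (fun k => k - x) '' K = (x + ·) ⁻¹' K := by
  ext a
  exact ⟨by rintro ⟨k, hk, rfl⟩; simpa using hk,
    fun h => ⟨x + a, h, add_sub_cancel_left x a⟩⟩

lemma convex_image_sub_const [Module ℝ E] (hK : Convex ℝ K) :
    Convex ℝ ((fun k => k - x) '' K) := by
  rw [image_sub_const_eq_preimage]
  exact hK.translate_preimage_right x

lemma isClosed_image_sub_const [TopologicalSpace E] [ContinuousAdd E] (hK : IsClosed K) :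
    IsClosed ((fun k => k - x) '' K) := by
  rw [image_sub_const_eq_preimage]
  exact hK.preimage (continuous_const_add x)

lemma sub_mem_interior_image_sub_const [TopologicalSpace E] [ContinuousAdd E]
    (hy : y ∈ interior K) : y - x ∈ interior ((fun k => k - x) '' K) := by
  rw [image_sub_const_eq_preimage]
  refine interior_maximal (Set.preimage_mono interior_subset)
    (isOpen_interior.preimage (continuous_const_add x)) ?_
  simpa using hy

lemma gauge_image_sub_const_lt_one [Module ℝ E] [TopologicalSpace E] [ContinuousAdd E]
    [ContinuousSMul ℝ E] (hy : y ∈ interior K) :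
    gauge ((fun k => k - x) '' K) (y - x) < 1 :=
  interior_subset_gauge_lt_one _ (sub_mem_interior_image_sub_const hy)

end Translate

section Macbeath

variable {d : ℕ} {K : Set (Euc d)} {x a : Euc d}

lemma mem_macbeathA : a ∈ macbeathA K x ↔ x + a ∈ K ∧ x - a ∈ K := by
  constructor
  · rintro ⟨k, ⟨hk, k', hk', rfl⟩, rfl⟩
    exact ⟨by simpa using hk, by convert hk' using 1; module⟩
  · rintro ⟨h₁, h₂⟩
    exact ⟨x + a, ⟨h₁, x - a, h₂, by module⟩, add_sub_cancel_left x a⟩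

lemma macbeathA_eq_inter_neg (K : Set (Euc d)) (x : Euc d) :
    macbeathA K x = (fun k => k - x) '' K ∩ -((fun k => k - x) '' K) := by
  ext a
  rw [mem_macbeathA, image_sub_const_eq_preimage]
  simp [sub_eq_add_neg]

lemma neg_mem_macbeathA (ha : a ∈ macbeathA K x) : -a ∈ macbeathA K x := by
  rw [mem_macbeathA] at ha ⊢
  rw [← sub_eq_add_neg, sub_neg_eq_add]
  exact ha.symm

lemma convex_macbeathA (hK : Convex ℝ K) : Convex ℝ (macbeathA K x) := by
  rw [macbeathA_eq_inter_neg]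
  exact (convex_image_sub_const hK).inter (convex_image_sub_const hK).neg

lemma isCompact_macbeathA (hK : IsCompact K) : IsCompact (macbeathA K x) := by
  rw [macbeathA_eq_inter_neg]
  have hKx := hK.image (continuous_sub_right x)
  exact hKx.inter_right hKx.neg.isClosed

lemma zero_mem_interior_macbeathA (hx : x ∈ interior K) :
    (0 : Euc d) ∈ interior (macbeathA K x) := by
  refine interior_maximal (t := (x + ·) ⁻¹' interior K ∩ (x - ·) ⁻¹' interior K)
    (fun a ha => mem_macbeathA.2 ⟨interior_subset ha.1, interior_subset ha.2⟩)
    ((isOpen_interior.preimage (continuous_const_add x)).inter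
      (isOpen_interior.preimage (continuous_sub_left x))) ?_
  simpa using hx

end Macbeath

lemma neg_half_mul_log_le_iff {P r : ℝ} (hP : 0 < P) :
    -(1 / 2) * Real.log P ≤ r ↔ Real.exp (-(2 * r)) ≤ P := by
  rw [← Real.log_le_log_iff (Real.exp_pos _) hP, Real.log_exp]
  constructor <;> intro h <;> linarith

section HilbertGeometry

variable {d : ℕ} {K : Set (Euc d)} {x y : Euc d} {r : ℝ}

lemma hilbertDist_le_iff (hx : x ∈ interior K) (hy : y ∈ interior K) :
    hilbertDist K x y ≤ r ↔ Real.exp (-(2 * r)) ≤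
      (1 - gauge ((fun k => k - x) '' K) (y - x)) *
        (1 - gauge ((fun k => k - y) '' K) (x - y)) :=
  neg_half_mul_log_le_iff (mul_pos (sub_pos.2 (gauge_image_sub_const_lt_one hy))
    (sub_pos.2 (gauge_image_sub_const_lt_one hx)))

lemma hilbertDist_comm (K : Set (Euc d)) (x y : Euc d) :
    hilbertDist K x y = hilbertDist K y x := by
  rw [hilbertDist, hilbertDist, mul_comm (1 - gauge ((fun k => k - x) '' K) (y - x))]

lemma gauge_le_of_hilbertDist_le (hx : x ∈ interior K) (hy : y ∈ interior K)
    (h : hilbertDist K x y ≤ r) :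
    gauge ((fun k => k - x) '' K) (y - x) ≤ 1 - Real.exp (-(2 * r)) := by
  have hprod := (hilbertDist_le_iff hx hy).1 h
  have h₁ := gauge_image_sub_const_lt_one (x := x) hy
  have h₂ := gauge_image_sub_const_lt_one (x := y) hx
  have h₃ : 0 ≤ gauge ((fun k => k - y) '' K) (x - y) := gauge_nonneg _
  nlinarith

lemma sub_mem_smul_of_hilbertDist_le (hKc : IsClosed K) (hKv : Convex ℝ K)
    (hx : x ∈ interior K) (hy : y ∈ interior K) (hr : 0 < r) (h : hilbertDist K x y ≤ r) :
    y - x ∈ (1 - Real.exp (-(2 * r))) • ((fun k => k - x) '' K) := by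
  refine mem_smul_of_gauge_le (convex_image_sub_const hKv) (isClosed_image_sub_const hKc) ?_
    (sub_pos.2 (Real.exp_lt_one_iff.2 (by linarith))) (gauge_le_of_hilbertDist_le hx hy h)
  simpa using mem_interior_iff_mem_nhds.1 (sub_mem_interior_image_sub_const (x := x) hx)

lemma smul_macbeathA_subset (hK : Convex ℝ K) {β : ℝ} (hβ₀ : 0 ≤ β) (hβ₁ : β ≤ 1)
    (h : y - x ∈ β • ((fun k => k - x) '' K)) :
    (1 - β) • macbeathA K x ⊆ macbeathA K y := by
  obtain ⟨u, hu, hyu⟩ := h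
  rw [image_sub_const_eq_preimage] at hu
  obtain rfl : y = x + β • u := eq_add_of_sub_eq' hyu.symm
  rintro _ ⟨a, ha, rfl⟩
  rw [mem_macbeathA] at ha ⊢
  constructor
  · convert hK hu ha.1 hβ₀ (sub_nonneg.2 hβ₁) (by ring) using 1; module
  · convert hK hu ha.2 hβ₀ (sub_nonneg.2 hβ₁) (by ring) using 1; module

lemma sub_mem_smul_macbeathA (hK : Convex ℝ K) (hx : x ∈ K) {β : ℝ} (hβ₀ : 0 < β)
    (hβ₁ : β < 1) (hxy : y - x ∈ β • ((fun k => k - x) '' K))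
    (hyx : x - y ∈ β • ((fun k => k - y) '' K)) :
    y - x ∈ (β / (1 - β)) • macbeathA K x := by
  obtain ⟨u, hu, hyu⟩ := hxy
  obtain ⟨v, hv, hxv⟩ := hyx
  rw [image_sub_const_eq_preimage, Set.mem_preimage] at hu hv
  obtain rfl : y = x + β • u := eq_add_of_sub_eq' hyu.symm
  obtain rfl : v = -u := smul_right_injective _ hβ₀.ne' <| by
    change β • v = x - (x + β • u) at hxv
    change β • v = β • -u
    rw [hxv]; module
  refine ⟨(1 - β) • u, mem_macbeathA.2 ⟨?_, ?_⟩, ?_⟩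
  · convert hK hx hu hβ₀.le (sub_nonneg.2 hβ₁.le) (by ring) using 1; module
  · convert hv using 1; module
  · change (β / (1 - β)) • (1 - β) • u = x + β • u - x
    rw [smul_smul, div_mul_cancel₀ _ (sub_ne_zero.2 hβ₁.ne'), add_sub_cancel_left]

lemma mem_hilbertBall_of_sub_mem_smul_macbeathA (hK : Convex ℝ K) (hx : x ∈ interior K)
    (hr : 0 ≤ r) (h : y - x ∈ ((1 - Real.exp (-(2 * r))) / 2) • macbeathA K x) :
    y ∈ hilbertBall K x r := by
  set σ := (1 - Real.exp (-(2 * r))) / 2 with hσ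
  have hσ₀ : 0 ≤ σ := by linarith [Real.exp_le_one_iff.2 (by linarith : -(2 * r) ≤ 0)]
  have hσ₁ : σ < 1 / 2 := by linarith [Real.exp_pos (-(2 * r))]
  obtain ⟨a, ha, hya⟩ := h
  obtain ⟨ha₁, ha₂⟩ := mem_macbeathA.1 ha
  obtain rfl : y = x + σ • a := eq_add_of_sub_eq' hya.symm
  have hy : x + σ • a ∈ interior K := by
    convert hK.combo_interior_self_mem_interior hx ha₁ (by linarith : 0 < 1 - σ) hσ₀ (by ring)
      using 1
    module
  refine ⟨hy, (hilbertDist_le_iff hx hy).2 ?_⟩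
  have hg₁ : gauge ((fun k => k - x) '' K) (x + σ • a - x) ≤ σ :=
    gauge_le_of_mem hσ₀ ⟨a, by rwa [image_sub_const_eq_preimage], by simp⟩
  have hg₂ :
      gauge ((fun k => k - (x + σ • a)) '' K) (x - (x + σ • a)) ≤ σ / (1 - σ) := by
    refine gauge_le_of_mem (div_nonneg hσ₀ (by linarith)) ⟨(1 - σ) • -a, ?_, ?_⟩
    · rw [image_sub_const_eq_preimage, Set.mem_preimage]
      convert hK ha₁ ha₂ hσ₀ (by linarith : 0 ≤ 1 - σ) (by ring) using 1
      module
    · change (σ / (1 - σ)) • (1 - σ) • -a = x - (x + σ • a)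
      rw [smul_smul, div_mul_cancel₀ _ (by linarith : 1 - σ ≠ 0)]
      module
  have hσ₂ : σ / (1 - σ) ≤ 1 := (div_le_one (by linarith)).2 (by linarith)
  calc Real.exp (-(2 * r)) = 1 - 2 * σ := by rw [hσ]; ring
    _ = (1 - σ) * (1 - σ / (1 - σ)) := by
      field_simp [(by linarith : 1 - σ ≠ 0)]
      ring
    _ ≤ _ := mul_le_mul (by linarith) (by linarith) (by linarith) (by linarith)

lemma sub_mem_smul_macbeathA_of_mem_hilbertBall (hKc : IsClosed K) (hKv : Convex ℝ K)
    (hx : x ∈ interior K) (hr : 0 < r) (hy : y ∈ hilbertBall K x r) :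
    y - x ∈ (Real.exp (2 * r) - 1) • macbeathA K x := by
  have h := sub_mem_smul_macbeathA hKv (interior_subset hx)
    (sub_pos.2 (Real.exp_lt_one_iff.2 (by linarith))) (by linarith [Real.exp_pos (-(2 * r))])
    (sub_mem_smul_of_hilbertDist_le hKc hKv hx hy.1 hr hy.2)
    (sub_mem_smul_of_hilbertDist_le hKc hKv hy.1 hx hr (hilbertDist_comm K y x ▸ hy.2))
  convert h using 2
  rw [Real.exp_neg]
  field_simp
  ring

lemma exp_smul_macbeathA_subset_of_mem_hilbertBall (hKc : IsClosed K) (hKv : Convex ℝ K)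
    (hx : x ∈ interior K) (hr : 0 < r) (hy : y ∈ hilbertBall K x r) :
    Real.exp (-(2 * r)) • macbeathA K x ⊆ macbeathA K y := by
  convert smul_macbeathA_subset hKv (sub_nonneg.2 (Real.exp_le_one_iff.2 (by linarith)))
    (by linarith [Real.exp_pos (-(2 * r))])
    (sub_mem_smul_of_hilbertDist_le hKc hKv hx hy.1 hr hy.2) using 2
  ring

end HilbertGeometry

lemma covering_ratio_le {r r' : ℝ} (hr : 0 < r) (hrr' : r ≤ r') :
    2 * (Real.exp (2 * r') - 1) / (Real.exp (-(2 * r')) * ((1 - Real.exp (-(2 * r))) / 2)) + 1 ≤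
      (4 * Real.exp (6 * r') + 1) * (r' / r) := by
  set E := Real.exp (-(2 * r'))
  set e := Real.exp (-(2 * r))
  have hE₀ : 0 < E := Real.exp_pos _
  have hr' : 0 < r' := hr.trans_le hrr'
  have hE : Real.exp (6 * r') * E * E = Real.exp (2 * r') := by
    rw [← Real.exp_add, ← Real.exp_add]; ring_nf
  have hexp : Real.exp (2 * r') - 1 ≤ 2 * r' * Real.exp (2 * r') := by
    have h := mul_le_mul_of_nonneg_right (Real.add_one_le_exp (-(2 * r')))
      (Real.exp_pos (2 * r')).le
    rw [← Real.exp_add, neg_add_cancel, Real.exp_zero] at h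
    linarith
  have he : 2 * r * e ≤ 1 - e := by
    have h := mul_le_mul_of_nonneg_right (Real.add_one_le_exp (2 * r))
      (Real.exp_pos (-(2 * r))).le
    rw [← Real.exp_add, add_neg_cancel, Real.exp_zero] at h
    linarith
  have hEe : E ≤ e := Real.exp_le_exp.2 (by linarith)
  have hε : 0 < E * ((1 - e) / 2) :=
    mul_pos hE₀ (by linarith [mul_pos (mul_pos two_pos hr) (Real.exp_pos (-(2 * r)))])
  have hquot : 2 * (Real.exp (2 * r') - 1) / (E * ((1 - e) / 2)) ≤
      4 * Real.exp (6 * r') * (r' / r) := by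
    rw [div_le_iff₀ hε]
    calc 2 * (Real.exp (2 * r') - 1) ≤ 4 * r' * Real.exp (2 * r') := by linarith
      _ = 4 * r' * (Real.exp (6 * r') * E) * E := by rw [← hE]; ring
      _ ≤ 4 * r' * (Real.exp (6 * r') * E) * e := by gcongr
      _ = 2 * (r' / r) * (Real.exp (6 * r') * E) * (2 * r * e) := by field_simp; ring
      _ ≤ 2 * (r' / r) * (Real.exp (6 * r') * E) * (1 - e) := by gcongr
      _ = 4 * Real.exp (6 * r') * (r' / r) * (E * ((1 - e) / 2)) := by ring
  have : 1 ≤ r' / r := (one_le_div hr).2 hrr'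
  linarith

section CoveringNumber

open Finset

variable {d : ℕ} {K U : Set (Euc d)} {z : Euc d} {r r' : ℝ}

lemma exists_finset_hilbertBall_cover (hKc : IsCompact K) (hKv : Convex ℝ K)
    (hz : z ∈ interior K) (hr : 0 < r) (hrr' : r ≤ r') :
    ∃ P : Finset (Euc d), ↑P ⊆ interior K ∧
      hilbertBall K z r' ⊆ ⋃ p ∈ P, hilbertBall K p r ∧
      (#P : ℝ) ≤ ((4 * Real.exp (6 * r') + 1) * (r' / r)) ^ d := by
  have hr' : 0 < r' := hr.trans_le hrr'
  set σ := (1 - Real.exp (-(2 * r))) / 2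
  have hσ : 0 < σ := half_pos (sub_pos.2 (Real.exp_lt_one_iff.2 (by linarith)))
  have ht : 0 ≤ Real.exp (2 * r') - 1 :=
    sub_nonneg.2 (Real.one_le_exp (by linarith))
  obtain ⟨P, hPS, hPcov, hPcard⟩ := exists_finset_subset_forall_sub_mem_smul
    (convex_macbeathA hKv) (fun _ => neg_mem_macbeathA)
    (interior_subset (zero_mem_interior_macbeathA hz)) (isCompact_macbeathA hKc).isBounded
    ⟨0, zero_mem_interior_macbeathA hz⟩ ht (mul_pos (Real.exp_pos _) hσ)
    (fun y hy => sub_mem_smul_macbeathA_of_mem_hilbertBall hKc.isClosed hKv hz hr' hy)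
  refine ⟨P, fun p hp => (hPS hp).1, fun y hy => ?_, ?_⟩
  · obtain ⟨p, hp, hyp⟩ := hPcov y hy
    rw [mul_comm, ← smul_smul] at hyp
    have hyp' : y - p ∈ σ • macbeathA K p := Set.smul_set_mono
      (exp_smul_macbeathA_subset_of_mem_hilbertBall hKc.isClosed hKv hz hr' (hPS hp)) hyp
    exact Set.mem_biUnion hp
      (mem_hilbertBall_of_sub_mem_smul_macbeathA hKv (hPS hp).1 hr.le hyp')
  · rw [finrank_euclideanSpace_fin] at hPcard
    exact hPcard.trans (pow_le_pow_left₀ (by positivity) (covering_ratio_le hr hrr') d)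

lemma hilbertCov_le_card (P : Finset (Euc d)) (hP : ↑P ⊆ interior K)
    (hU : U ⊆ ⋃ p ∈ P, hilbertBall K p r) : hilbertCov K U r ≤ #P := by
  refine Nat.sInf_le ⟨fun i => P.equivFin.symm i, fun i => hP (P.equivFin.symm i).2, ?_⟩
  intro u hu
  obtain ⟨p, hp, hup⟩ := Set.mem_iUnion₂.1 (hU hu)
  exact Set.mem_iUnion.2 ⟨P.equivFin ⟨p, hp⟩, by simpa using hup⟩

lemma hilbertBall_mono (h : r ≤ r') : hilbertBall K z r ⊆ hilbertBall K z r' :=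
  fun _ hy => ⟨hy.1, hy.2.trans h⟩

lemma hilbertCov_le_mul_hilbertCov (hrr' : r ≤ r') {M : ℕ}
    (hM : ∀ z ∈ interior K, ∃ P : Finset (Euc d), ↑P ⊆ interior K ∧
      hilbertBall K z r' ⊆ ⋃ p ∈ P, hilbertBall K p r ∧ #P ≤ M) :
    hilbertCov K U r ≤ M * hilbertCov K U r' := by
  classical
  by_cases h : {m : ℕ | ∃ x : Fin m → Euc d, (∀ i, x i ∈ interior K) ∧
      U ⊆ ⋃ i, hilbertBall K (x i) r'}.Nonempty
  · obtain ⟨x, hx, hU⟩ := Nat.sInf_mem h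
    choose P hPK hPcov hPcard using fun i => hM (x i) (hx i)
    calc hilbertCov K U r ≤ #(univ.biUnion P) := by
          refine hilbertCov_le_card _ (by simpa using fun i => hPK i) fun u hu => ?_
          obtain ⟨i, hi⟩ := Set.mem_iUnion.1 (hU hu)
          obtain ⟨p, hp, hup⟩ := Set.mem_iUnion₂.1 (hPcov i hi)
          exact Set.mem_biUnion (mem_biUnion.2 ⟨i, mem_univ i, hp⟩) hup
      _ ≤ ∑ i, #(P i) := card_biUnion_le
      _ ≤ ∑ _ : Fin (hilbertCov K U r'), M := sum_le_sum fun i _ => hPcard i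
      _ = M * hilbertCov K U r' := by simp [mul_comm]
  -- without a finite `r'`-cover both covering numbers are the junk value `sInf ∅ = 0`
  · have hr' : hilbertCov K U r' = 0 :=
      Nat.sInf_eq_zero.2 (Or.inr (Set.not_nonempty_iff_eq_empty.1 h))
    have hr : hilbertCov K U r = 0 :=
      Nat.sInf_eq_zero.2 <| Or.inr <| Set.eq_empty_of_forall_notMem fun m ⟨x, hx, hU⟩ =>
        h ⟨m, x, hx, hU.trans (Set.iUnion_mono fun _ => hilbertBall_mono hrr')⟩
    simp [hr, hr']

lemma hilbertCov_le_pow_mul_hilbertCov (hKc : IsCompact K) (hKv : Convex ℝ K) (hr : 0 < r)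
    (hrr' : r ≤ r') :
    (hilbertCov K U r : ℝ) ≤
      ((4 * Real.exp (6 * r') + 1) * (r' / r)) ^ d * hilbertCov K U r' := by
  have hr' : 0 < r' := hr.trans_le hrr'
  have hM : ∀ z ∈ interior K, ∃ P : Finset (Euc d), ↑P ⊆ interior K ∧
      hilbertBall K z r' ⊆ ⋃ p ∈ P, hilbertBall K p r ∧
      #P ≤ ⌊((4 * Real.exp (6 * r') + 1) * (r' / r)) ^ d⌋₊ := fun z hz => by
    obtain ⟨P, hPK, hPcov, hPcard⟩ := exists_finset_hilbertBall_cover hKc hKv hz hr hrr'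
    exact ⟨P, hPK, hPcov, Nat.le_floor hPcard⟩
  calc (hilbertCov K U r : ℝ)
      ≤ (⌊((4 * Real.exp (6 * r') + 1) * (r' / r)) ^ d⌋₊ * hilbertCov K U r' : ℕ) := by
        exact_mod_cast hilbertCov_le_mul_hilbertCov hrr' hM
    _ ≤ ((4 * Real.exp (6 * r') + 1) * (r' / r)) ^ d * hilbertCov K U r' := by
        push_cast
        gcongr
        exact Nat.floor_le (by positivity)

end CoveringNumber

/-- Hilbert covering bound under change of radius. -/
theorem hilbert_cover_radius_change :
    ∃ c : ℝ, 1 ≤ c ∧ ∀ d : ℕ, 2 ≤ d →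
      ∀ K : Set (Euc d), IsConvexBody K →
        ∀ r r' : ℝ, 0 < r → r ≤ r' → r' ≤ 4 →
          ∀ U : Set (Euc d), U ⊆ interior K →
            (hilbertCov K U r : ℝ) ≤ c ^ d * (r' / r) ^ d * (hilbertCov K U r' : ℝ) := by
  refine ⟨4 * Real.exp 24 + 1, by linarith [Real.exp_pos 24], ?_⟩
  intro d _ K ⟨hKc, hKv, _⟩ r r' hr hrr' hr4 U _
  have hr' : 0 < r' := hr.trans_le hrr'
  calc (hilbertCov K U r : ℝ)
      ≤ ((4 * Real.exp (6 * r') + 1) * (r' / r)) ^ d * hilbertCov K U r' :=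
        hilbertCov_le_pow_mul_hilbertCov hKc hKv hr hrr'
    _ ≤ ((4 * Real.exp 24 + 1) * (r' / r)) ^ d * hilbertCov K U r' := by
        gcongr
        linarith
    _ = (4 * Real.exp 24 + 1) ^ d * (r' / r) ^ d * hilbertCov K U r' := by rw [mul_pow]
end
end

section
/- There exists a constant c₀ > 1 (independent of the dimension and of the body) such that for every dimension d ≥ 2, every convex body K ⊆ ℝ^d, every x ∈ int(K), and every y ∈ int(K) with d_H^K(x,y) ≤ 8, one has (1/c₀)·A(x) ⊆ B_y ⊆ c₀·A(x), where A(x) := (K ∩ (2x − K)) − x is the recentered Macbeath region at x and B_y := {v ∈ ℝ^d : ‖v‖_{K−y} + ‖−v‖_{K−y} ≤ 2} is the Hilbert Finsler unit ball at y. -/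
open Set MeasureTheory Metric
open scoped Pointwise RealInnerProductSpace ENNReal

noncomputable section

open scoped Topology

/-!
If `d_H(x, y) ≤ 8`, the gauge of `K − y` at `x − y` is at most `1 − s` with `s = e⁻¹⁶`, so
`x = (1 − s) p + s y` for some `p ∈ K`; the homothety of centre `p` and ratio `s` maps `K` into
itself and the Macbeath region at `y` into the one at `x`, i.e. `s A(y) ⊆ A(x)`, and symmetrically
`s A(x) ⊆ A(y)`. Since moreover `A(y) ⊆ B_y ⊆ 2 A(y)`, the constant `c₀ = 2 e¹⁶` works.
-/

section MacbeathFinsler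

variable {d : ℕ} {K : Set (Euc d)}

lemma mem_image_sub_right_iff {z w : Euc d} : w ∈ (fun k => k - z) '' K ↔ z + w ∈ K := by
  constructor
  · rintro ⟨k, hk, rfl⟩
    simpa using hk
  · exact fun h => ⟨z + w, h, add_sub_cancel_left z w⟩

lemma mem_macbeathA_iff {x v : Euc d} : v ∈ macbeathA K x ↔ x + v ∈ K ∧ x - v ∈ K := by
  constructor
  · rintro ⟨k, ⟨hk, k', hk', rfl⟩, rfl⟩
    refine ⟨by simpa using hk, ?_⟩
    convert hk' using 1
    module
  · rintro ⟨h₁, h₂⟩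
    exact ⟨x + v, ⟨h₁, x - v, h₂, by module⟩, add_sub_cancel_left x v⟩

lemma gauge_image_sub_lt_one (x : Euc d) {y : Euc d} (hy : y ∈ interior K) :
    gauge ((fun k => k - x) '' K) (y - x) < 1 :=
  interior_subset_gauge_lt_one _
    ((Homeomorph.subRight x).isOpenMap.image_interior_subset K ⟨y, hy, rfl⟩)

lemma add_mem_of_gauge_image_sub_le_one (hKc : IsClosed K) (hKv : Convex ℝ K) {y v : Euc d}
    (hy : y ∈ interior K) (hv : gauge ((fun k => k - y) '' K) v ≤ 1) : y + v ∈ K := by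
  have hconv : Convex ℝ ((fun k => k - y) '' K) := by
    simpa only [sub_eq_add_neg, add_comm _ (-y)] using hKv.translate (-y)
  have hnhds : (fun k => k - y) '' K ∈ 𝓝 (0 : Euc d) := by
    simpa using (Homeomorph.subRight y).isOpenMap.image_mem_nhds (mem_interior_iff_mem_nhds.1 hy)
  have hclosed : IsClosed ((fun k => k - y) '' K) := (Homeomorph.subRight y).isClosedMap K hKc
  rw [← mem_image_sub_right_iff, ← hclosed.closure_eq]
  exact (gauge_le_one_iff_mem_closure hconv hnhds).1 hv

lemma gauge_le_one_sub_exp_of_hilbertDist_le {x y : Euc d} {r : ℝ} (hx : x ∈ interior K)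
    (hy : y ∈ interior K) (h : hilbertDist K x y ≤ r) :
    gauge ((fun k => k - x) '' K) (y - x) ≤ 1 - Real.exp (-2 * r) ∧
      gauge ((fun k => k - y) '' K) (x - y) ≤ 1 - Real.exp (-2 * r) := by
  set a := gauge ((fun k => k - x) '' K) (y - x)
  set b := gauge ((fun k => k - y) '' K) (x - y)
  have ha₀ : 0 ≤ a := gauge_nonneg _
  have hb₀ : 0 ≤ b := gauge_nonneg _
  have ha₁ : a < 1 := gauge_image_sub_lt_one x hy
  have hb₁ : b < 1 := gauge_image_sub_lt_one y hx
  have hprod : Real.exp (-2 * r) ≤ (1 - a) * (1 - b) := by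
    rw [← Real.exp_log (by nlinarith : 0 < (1 - a) * (1 - b))]
    apply Real.exp_le_exp.2
    unfold hilbertDist at h
    linarith
  constructor <;> nlinarith

lemma smul_macbeathA_subset_of_mem (hKv : Convex ℝ K) {p : Euc d} (hp : p ∈ K) (y : Euc d)
    {s : ℝ} (hs₀ : 0 ≤ s) (hs₁ : s ≤ 1) :
    s • macbeathA K y ⊆ macbeathA K ((1 - s) • p + s • y) := by
  rintro _ ⟨v, hv, rfl⟩
  obtain ⟨h₁, h₂⟩ := mem_macbeathA_iff.1 hv
  refine mem_macbeathA_iff.2 ⟨?_, ?_⟩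
  · convert hKv hp h₁ (sub_nonneg.2 hs₁) hs₀ (sub_add_cancel 1 s) using 1
    module
  · convert hKv hp h₂ (sub_nonneg.2 hs₁) hs₀ (sub_add_cancel 1 s) using 1
    module

lemma smul_macbeathA_subset_of_gauge_le (hKc : IsClosed K) (hKv : Convex ℝ K) {x y : Euc d}
    (hy : y ∈ interior K) {s : ℝ} (hs₀ : 0 ≤ s) (hs₁ : s < 1)
    (h : gauge ((fun k => k - y) '' K) (x - y) ≤ 1 - s) :
    s • macbeathA K y ⊆ macbeathA K x := by
  have hs : 0 < 1 - s := by linarith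
  have hp : y + (1 - s)⁻¹ • (x - y) ∈ K := by
    apply add_mem_of_gauge_image_sub_le_one hKc hKv hy
    rw [gauge_smul_of_nonneg (inv_nonneg.2 hs.le), smul_eq_mul, inv_mul_le_iff₀ hs, mul_one]
    exact h
  have hx : (1 - s) • (y + (1 - s)⁻¹ • (x - y)) + s • y = x := by
    rw [smul_add, smul_smul, mul_inv_cancel₀ hs.ne', one_smul]
    module
  simpa only [hx] using smul_macbeathA_subset_of_mem hKv hp y hs₀ hs₁.le

lemma macbeathA_subset_finslerBall (x : Euc d) : macbeathA K x ⊆ finslerBall K x := by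
  intro v hv
  obtain ⟨h₁, h₂⟩ := mem_macbeathA_iff.1 hv
  have g₁ := gauge_le_one_of_mem (mem_image_sub_right_iff.2 h₁)
  have g₂ := gauge_le_one_of_mem (mem_image_sub_right_iff.2 (sub_eq_add_neg x v ▸ h₂))
  simp only [finslerBall, mem_ofPred_eq]
  linarith

lemma finslerBall_subset_two_smul_macbeathA (hKc : IsClosed K) (hKv : Convex ℝ K) {x : Euc d}
    (hx : x ∈ interior K) : finslerBall K x ⊆ (2 : ℝ) • macbeathA K x := by
  intro v hv
  simp only [finslerBall, mem_ofPred_eq] at hv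
  have half_mem : ∀ w, gauge ((fun k => k - x) '' K) w ≤ 2 → x + (1 / 2 : ℝ) • w ∈ K := by
    intro w hw
    apply add_mem_of_gauge_image_sub_le_one hKc hKv hx
    rw [gauge_smul_of_nonneg (by norm_num), smul_eq_mul]
    linarith
  have h₁ := half_mem v (by linarith [gauge_nonneg (s := (fun k => k - x) '' K) (-v)])
  have h₂ := half_mem (-v) (by linarith [gauge_nonneg (s := (fun k => k - x) '' K) v])
  rw [smul_neg, ← sub_eq_add_neg] at h₂
  refine ⟨(1 / 2 : ℝ) • v, mem_macbeathA_iff.2 ⟨h₁, h₂⟩, ?_⟩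
  simp only [smul_smul]
  norm_num

end MacbeathFinsler

/-- Local comparability of Hilbert Finsler balls and Macbeath regions. -/
theorem local_finsler_macbeath :
    ∃ c₀ : ℝ, 1 < c₀ ∧ ∀ d : ℕ, 2 ≤ d →
      ∀ K : Set (Euc d), IsConvexBody K →
        ∀ x ∈ interior K, ∀ y ∈ interior K, hilbertDist K x y ≤ 8 →
          c₀⁻¹ • macbeathA K x ⊆ finslerBall K y ∧
          finslerBall K y ⊆ c₀ • macbeathA K x := by
  set s := Real.exp (-16)
  have hs₀ : 0 < s := Real.exp_pos _
  have hs₁ : s < 1 := Real.exp_lt_one_iff.2 (by norm_num)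
  refine ⟨2 / s, by rw [lt_div_iff₀ hs₀]; linarith, fun d _ K hK x hx y hy hdist => ?_⟩
  obtain ⟨hKcpt, hKv, -⟩ := hK
  have hKc : IsClosed K := hKcpt.isClosed
  obtain ⟨hgx, hgy⟩ := gauge_le_one_sub_exp_of_hilbertDist_le hx hy hdist
  rw [show (-2 * 8 : ℝ) = -16 by norm_num] at hgx hgy
  constructor
  · calc (2 / s)⁻¹ • macbeathA K x
        ⊆ macbeathA K y :=
          smul_macbeathA_subset_of_gauge_le hKc hKv hx (by positivity)
            (by rw [inv_div]; linarith) (by rw [inv_div]; linarith)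
      _ ⊆ finslerBall K y := macbeathA_subset_finslerBall y
  · have hAyx := smul_macbeathA_subset_of_gauge_le hKc hKv hy hs₀.le hs₁ hgy
    calc finslerBall K y
        ⊆ (2 : ℝ) • macbeathA K y := finslerBall_subset_two_smul_macbeathA hKc hKv hy
      _ ⊆ (2 : ℝ) • s⁻¹ • macbeathA K x :=
          smul_set_mono ((smul_set_subset_iff₀ hs₀.ne').1 hAyx)
      _ = (2 / s) • macbeathA K x := by rw [smul_smul, div_eq_mul_inv]
end
end

section
/- Let C be a convex body and D a centrally symmetric convex body in ℝ^d, let α > 0, and let C₊ := C + α·D (Minkowski sum). Then for every z in the frontier ∂C₊ and every r with 0 < r ≤ α, one has λ_d(C₊ ∩ (z + r·D)) ≥ 2^{−d} · λ_d(z + r·D) = 2^{−d} · r^d · λ_d(D), where λ_d is Lebesgue measure on ℝ^d. -/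
open Set MeasureTheory Metric
open scoped Pointwise RealInnerProductSpace ENNReal

noncomputable section

/-!
Write `z = c + α • v` with `c ∈ C` and `v ∈ D`. The translate `(z - (r/2) • v) +ᵥ (r/2) • D` lies
in `C + α • D`, since `(α - r/2) • v + (r/2) • D ⊆ α • D` by convexity of `D`, and in
`z +ᵥ r • D`, since `-(r/2) • v + (r/2) • D ⊆ r • D` by convexity and symmetry of `D`. Its volume
is `2⁻ᵈ` times that of `z +ᵥ r • D`.
-/

section Convex

variable {E : Type*} [AddCommGroup E] [Module ℝ E] {D : Set E}

theorem Convex.vadd_smul_subset_smul_of_mem (hD : Convex ℝ D) {v : E} (hv : v ∈ D) {a s : ℝ}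
    (hs : 0 ≤ s) (hsa : s ≤ a) : (a - s) • v +ᵥ s • D ⊆ a • D := by
  rw [← sub_add_cancel a s, hD.add_smul (sub_nonneg.2 hsa) hs, add_sub_cancel_right]
  exact vadd_set_subset_add (smul_mem_smul_set hv)

theorem Convex.vadd_half_smul_subset_add_inter_vadd (hD : Convex ℝ D) {C : Set E} {c v : E}
    (hc : c ∈ C) (hv : v ∈ D) (hnv : -v ∈ D) {α r : ℝ} (hr : 0 ≤ r) (hrα : r ≤ 2 * α) :
    (c + α • v - (r / 2) • v) +ᵥ (r / 2) • D ⊆ (C + α • D) ∩ ((c + α • v) +ᵥ r • D) := by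
  refine subset_inter ?_ ?_
  · have hsub :=
      hD.vadd_smul_subset_smul_of_mem (a := α) hv (by positivity : 0 ≤ r / 2) (by linarith)
    calc (c + α • v - (r / 2) • v) +ᵥ (r / 2) • D = c +ᵥ ((α - r / 2) • v +ᵥ (r / 2) • D) := by
          rw [vadd_vadd]; congr 1; module
      _ ⊆ c +ᵥ α • D := vadd_set_mono hsub
      _ ⊆ C + α • D := vadd_set_subset_add hc
  · have hsub :=
      hD.vadd_smul_subset_smul_of_mem (a := r) hnv (by positivity : 0 ≤ r / 2) (by linarith)
    calc (c + α • v - (r / 2) • v) +ᵥ (r / 2) • D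
          = (c + α • v) +ᵥ ((r - r / 2) • -v +ᵥ (r / 2) • D) := by
          rw [vadd_vadd]; congr 1; module
      _ ⊆ (c + α • v) +ᵥ r • D := vadd_set_mono hsub

end Convex

section Volume

variable {E : Type*} [NormedAddCommGroup E] [NormedSpace ℝ E] [MeasurableSpace E] [BorelSpace E]
  [FiniteDimensional ℝ E] (μ : Measure E) [μ.IsAddHaarMeasure]

theorem addHaar_vadd_smul (x : E) {r : ℝ} (hr : 0 ≤ r) (D : Set E) :
    μ (x +ᵥ r • D) = ENNReal.ofReal (r ^ Module.finrank ℝ E) * μ D := by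
  rw [measure_vadd, Measure.addHaar_smul, abs_of_nonneg (pow_nonneg hr _)]

theorem addHaar_vadd_half_smul (x y : E) {r : ℝ} (hr : 0 ≤ r) (D : Set E) :
    μ (x +ᵥ (r / 2) • D) = (2 : ℝ≥0∞)⁻¹ ^ Module.finrank ℝ E * μ (y +ᵥ r • D) := by
  rw [addHaar_vadd_smul μ x (by positivity), addHaar_vadd_smul μ y hr, ← mul_assoc, div_pow,
    ENNReal.ofReal_div_of_pos (by positivity), ENNReal.ofReal_pow zero_le_two,
    ENNReal.ofReal_ofNat, ENNReal.div_eq_inv_mul, ENNReal.inv_pow]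

end Volume

theorem mink_expansion_fat_general {d : ℕ} (C D : Set (Euc d))
    (hC : IsConvexBody C) (hD : IsConvexBody D) (hDs : D = -D)
    (α : ℝ) (z : Euc d) (hz : z ∈ frontier (C + α • D))
    (r : ℝ) (hr : 0 < r) (hrα : r ≤ α) :
    (2 : ℝ≥0∞)⁻¹ ^ d * volume (z +ᵥ r • D) ≤ volume ((C + α • D) ∩ (z +ᵥ r • D)) ∧
    volume (z +ᵥ r • D) = ENNReal.ofReal (r ^ d) * volume D := by
  obtain ⟨hCc, -, -⟩ := hC
  obtain ⟨hDc, hDv, -⟩ := hD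
  have hvol := addHaar_vadd_smul volume z hr.le D
  rw [finrank_euclideanSpace_fin] at hvol
  refine ⟨?_, hvol⟩
  have hzmem : z ∈ C + α • D :=
    (hCc.add (hDc.smul α)).isClosed.closure_subset (frontier_subset_closure hz)
  obtain ⟨c, hc, _, ⟨v, hv, rfl⟩, rfl⟩ := hzmem
  have hnv : -v ∈ D := by rw [hDs]; exact neg_mem_neg.2 hv
  calc (2 : ℝ≥0∞)⁻¹ ^ d * volume ((c + α • v) +ᵥ r • D)
      = volume ((c + α • v - (r / 2) • v) +ᵥ (r / 2) • D) := by
        rw [addHaar_vadd_half_smul volume _ _ hr.le, finrank_euclideanSpace_fin]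
    _ ≤ volume ((C + α • D) ∩ ((c + α • v) +ᵥ r • D)) :=
        measure_mono (hDv.vadd_half_smul_subset_add_inter_vadd hc hv hnv hr.le (by linarith))

/-- Relative fatness of Minkowski expansions. -/
theorem mink_expansion_fat {d : ℕ} (C D : Set (Euc d))
    (hC : IsConvexBody C) (hD : IsConvexBody D) (hDs : D = -D)
    (α : ℝ) (hα : 0 < α) (z : Euc d) (hz : z ∈ frontier (C + α • D))
    (r : ℝ) (hr : 0 < r) (hrα : r ≤ α) :
    (2 : ℝ≥0∞)⁻¹ ^ d * volume (z +ᵥ r • D) ≤ volume ((C + α • D) ∩ (z +ᵥ r • D)) ∧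
    volume (z +ᵥ r • D) = ENNReal.ofReal (r ^ d) * volume D :=
  mink_expansion_fat_general C D hC hD hDs α z hz r hr hrα
end
end

section
/- Let K be a convex body in ℝ^d (d ≥ 2), let x ∈ int(K), and let h be an affine hyperplane through x. Then there exist points a, b ∈ ∂K with x lying in the open segment between a and b, and supporting hyperplanes h_a of K at a and h_b of K at b, such that either (1) h_a and h_b are not parallel and their intersection h_a ∩ h_b (an affine (d−2)-dimensional flat) is contained in h, or (2) h_a, h_b, and h are mutually parallel hyperplanes. (That is, the chord through x determined by a and b is complementary to h: the supporting hyperplanes at its endpoints meet in a (d−2)-flat contained in h, possibly at infinity.) -/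
/-!
Translate `x` to the origin and pass to the polar body `P` of `K`. A longest chord `[v, u]` of `P`
in direction `n` carries parallel supporting hyperplanes `⟪w, ·⟫ = const` at its endpoints (a
supporting hyperplane of the difference body `P - P` at `u - v`). Dually, `⟪u, ·⟫ = 1` and
`⟪v, ·⟫ = 1` support `K` at the two points `a`, `b` where the line `ℝ w` leaves `K`, and since
`u - v` is a multiple of `n`, these two hyperplanes meet inside `n⟂`.
-/
open Set MeasureTheory Metric
open scoped Pointwise RealInnerProductSpace ENNReal

noncomputable section

open Topology

section NormedSpace

variable {E : Type*} [NormedAddCommGroup E] [NormedSpace ℝ E]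

theorem exists_pos_add_smul_mem_of_mem_interior {S : Set E} {p : E} (hp : p ∈ interior S)
    (v : E) : ∃ δ : ℝ, 0 < δ ∧ p + δ • v ∈ S := by
  have hcont : Filter.Tendsto (fun δ : ℝ => p + δ • v) (𝓝[>] 0) (𝓝 p) := by
    refine Filter.Tendsto.mono_left ?_ nhdsWithin_le_nhds
    exact (by fun_prop : Continuous fun δ : ℝ => p + δ • v).tendsto' 0 p (by simp)
  obtain ⟨δ, hδS, hδ⟩ :=
    ((hcont.eventually (mem_interior_iff_mem_nhds.1 hp)).and self_mem_nhdsWithin).exists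
  exact ⟨δ, hδ, hδS⟩

theorem exists_chord_with_parallel_supports {P : Set E} (hPc : IsCompact P) (hPv : Convex ℝ P)
    (hP : (interior P).Nonempty) {n : E} (hn : n ≠ 0) :
    ∃ u ∈ P, ∃ v ∈ P, ∃ t : ℝ, t ≠ 0 ∧ u - v = t • n ∧
      ∃ f : StrongDual ℝ E, f ≠ 0 ∧ IsMaxOn f P u ∧ IsMinOn f P v := by
  have hDc : IsCompact (P - P) := by rw [sub_eq_add_neg]; exact hPc.add hPc.neg
  have hD0 : (0 : E) ∈ interior (P - P) := by
    obtain ⟨p, hp⟩ := hP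
    refine interior_maximal (sub_subset_sub_right interior_subset) isOpen_interior.sub_right ?_
    simpa using sub_mem_sub hp (interior_subset hp)
  obtain ⟨t, ht, htmax⟩ :=
    ((isClosedEmbedding_smul_left (𝕜 := ℝ) hn).isCompact_preimage hDc).exists_isMaxOn
      ⟨0, by simpa using interior_subset hD0⟩ continuousOn_id
  have hnot : t • n ∉ interior (P - P) := fun h => by
    obtain ⟨δ, hδ, hmem⟩ := exists_pos_add_smul_mem_of_mem_interior h n
    have : t + δ ≤ t := htmax (show (t + δ) • n ∈ P - P by rwa [add_smul])
    linarith
  have ht0 : t ≠ 0 := by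
    rintro rfl
    exact hnot (by simpa using hD0)
  obtain ⟨f, hf, hfmax⟩ :=
    geometric_hahn_banach_of_nonempty_interior_point (hPv.sub hPv) hnot ⟨0, hD0⟩
  obtain ⟨u, hu, v, hv, huv⟩ : ∃ u ∈ P, ∃ v ∈ P, u - v = t • n := ht
  refine ⟨u, hu, v, hv, t, ht0, huv, f, hf, fun z hz => ?_, fun z hz => ?_⟩
  · have := hfmax (z - v) (sub_mem_sub hz hv)
    rw [← huv, map_sub, map_sub] at this
    exact (by linarith : f z ≤ f u)
  · have := hfmax (u - z) (sub_mem_sub hu hz)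
    rw [← huv, map_sub, map_sub] at this
    exact (by linarith : f v ≤ f z)

end NormedSpace

section InnerProductSpace

variable {E : Type*} [NormedAddCommGroup E] [InnerProductSpace ℝ E]

theorem exists_inner_lt_of_mem_interior {S : Set E} {p w : E} (hp : p ∈ interior S)
    (hw : w ≠ 0) : ∃ z ∈ S, ⟪w, p⟫ < ⟪w, z⟫ := by
  obtain ⟨δ, hδ, hmem⟩ := exists_pos_add_smul_mem_of_mem_interior hp w
  refine ⟨_, hmem, ?_⟩
  rw [inner_add_right, real_inner_smul_right, lt_add_iff_pos_right]
  exact mul_pos hδ (real_inner_self_pos.2 hw)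

theorem inner_pos_of_isMaxOn {S : Set E} {u w : E} (h0 : (0 : E) ∈ interior S) (hw : w ≠ 0)
    (hmax : IsMaxOn (⟪w, ·⟫) S u) : 0 < ⟪w, u⟫ := by
  obtain ⟨z, hz, hlt⟩ := exists_inner_lt_of_mem_interior h0 hw
  rw [inner_zero_right] at hlt
  exact hlt.trans_le (hmax hz)

theorem mem_frontier_of_forall_inner_le {K : Set E} {a u : E} (ha : a ∈ K) (hu : u ≠ 0)
    (hsupp : ∀ y ∈ K, ⟪u, y⟫ ≤ ⟪u, a⟫) : a ∈ frontier K := by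
  refine ⟨subset_closure ha, fun hint => ?_⟩
  obtain ⟨z, hz, hlt⟩ := exists_inner_lt_of_mem_interior hint hu
  exact (hsupp z hz).not_gt hlt

theorem zero_mem_openSegment_smul_neg {s s' : ℝ} (hs : 0 < s) (hs' : 0 < s') (w : E) :
    (0 : E) ∈ openSegment ℝ (s • w) (s' • -w) := by
  refine ⟨s' / (s + s'), s / (s + s'), by positivity, by positivity, by field_simp; ring, ?_⟩
  module

theorem inter_subset_orthogonal_or_parallel {u v n : E} {t : ℝ} (ht : t ≠ 0) (hn : n ≠ 0)
    (huv : u - v = t • n) (c : ℝ) :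
    (¬ (∃ τ : ℝ, v = τ • u) ∧
        {y : E | ⟪u, y⟫ = c} ∩ {y : E | ⟪v, y⟫ = c} ⊆ {y : E | ⟪n, y⟫ = 0}) ∨
      (∃ s τ : ℝ, u = s • n ∧ v = τ • n) := by
  by_cases hpar : ∃ τ : ℝ, v = τ • u
  · right
    obtain ⟨τ, rfl⟩ := hpar
    have hτ : 1 - τ ≠ 0 := by
      intro hτ
      refine smul_ne_zero ht hn ?_
      rw [← huv, show τ = 1 by linarith, one_smul, sub_self]
    have hu : u = ((1 - τ)⁻¹ * t) • n := by
      rw [mul_smul, eq_inv_smul_iff₀ hτ, ← huv, sub_smul, one_smul]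
    exact ⟨_, _, hu, by rw [hu, smul_smul]⟩
  · left
    refine ⟨hpar, fun y ⟨hyu, hyv⟩ => ?_⟩
    have : t * ⟪n, y⟫ = 0 := by
      rw [← real_inner_smul_left, ← huv, inner_sub_left, hyu, hyv, sub_self]
    exact (mul_eq_zero.1 this).resolve_left ht

def HasComplementaryChord (K : Set E) (x n : E) : Prop :=
  ∃ a ∈ frontier K, ∃ b ∈ frontier K, x ∈ openSegment ℝ a b ∧
    ∃ u v : E, u ≠ 0 ∧ v ≠ 0 ∧
      (∀ y ∈ K, ⟪u, y⟫ ≤ ⟪u, a⟫) ∧ (∀ y ∈ K, ⟪v, y⟫ ≤ ⟪v, b⟫) ∧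
      ((¬ (∃ t : ℝ, v = t • u) ∧
          {y : E | ⟪u, y⟫ = ⟪u, a⟫} ∩ {y : E | ⟪v, y⟫ = ⟪v, b⟫} ⊆ {y : E | ⟪n, y⟫ = ⟪n, x⟫}) ∨
        (∃ s t : ℝ, u = s • n ∧ v = t • n))

theorem HasComplementaryChord.vadd {K : Set E} {x n : E} (h : HasComplementaryChord K x n)
    (p : E) : HasComplementaryChord (p +ᵥ K) (p +ᵥ x) n := by
  obtain ⟨a, ha, b, hb, hx, u, v, hu, hv, hua, hvb, hcase⟩ := h
  have hfrontier : frontier (p +ᵥ K) = p +ᵥ frontier K := by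
    simp only [frontier, closure_vadd, interior_vadd, vadd_set_sdiff]
  have hshift : ∀ w y : E, ⟪w, p +ᵥ y⟫ = ⟪w, p⟫ + ⟪w, y⟫ := fun w y => inner_add_right w p y
  refine ⟨p +ᵥ a, hfrontier ▸ vadd_mem_vadd_set ha, p +ᵥ b, hfrontier ▸ vadd_mem_vadd_set hb,
    (mem_openSegment_translate ℝ p).2 hx, u, v, hu, hv, ?_, ?_, ?_⟩
  · rintro _ ⟨y, hy, rfl⟩
    simpa only [hshift, add_le_add_iff_left] using hua y hy
  · rintro _ ⟨y, hy, rfl⟩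
    simpa only [hshift, add_le_add_iff_left] using hvb y hy
  · refine hcase.imp (fun ⟨hnpar, hsub⟩ => ⟨hnpar, fun y ⟨hyu, hyv⟩ => ?_⟩) id
    have := @hsub (-p + y) ⟨?_, ?_⟩ <;>
      simp_all only [mem_ofPred_eq, vadd_eq_add, inner_add_right, inner_neg_right]
    all_goals linarith

end InnerProductSpace

section Polar

variable {d : ℕ}

theorem convex_polarSet (K : Set (Euc d)) : Convex ℝ (polarSet K) := by
  simp only [polarSet, ofPred_forall]
  exact convex_iInter₂ fun x _ => convex_halfSpace_le (innerₛₗ ℝ x).isLinear 1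

theorem isClosed_polarSet (K : Set (Euc d)) : IsClosed (polarSet K) := by
  simp only [polarSet, ofPred_forall]
  exact isClosed_biInter fun x _ => isClosed_le (continuous_const.inner continuous_id)
    continuous_const

theorem isBounded_polarSet {K : Set (Euc d)} (h0 : (0 : Euc d) ∈ interior K) :
    Bornology.IsBounded (polarSet K) := by
  obtain ⟨ε, hε, hball⟩ := Metric.mem_nhds_iff.1 (mem_interior_iff_mem_nhds.1 h0)
  refine isBounded_iff_forall_norm_le.2 ⟨2 / ε, fun z hz => ?_⟩
  rcases eq_or_ne z 0 with rfl | hz0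
  · simp only [norm_zero]; positivity
  have hz0 : 0 < ‖z‖ := norm_pos_iff.2 hz0
  have hy : (ε / (2 * ‖z‖)) • z ∈ ball (0 : Euc d) ε := by
    rw [mem_ball_zero_iff, norm_smul, Real.norm_of_nonneg (by positivity)]
    field_simp
    linarith
  have := hz _ (hball hy)
  rw [real_inner_smul_left, real_inner_self_eq_norm_sq] at this
  rw [le_div_iff₀ hε]
  field_simp at this
  nlinarith

theorem zero_mem_interior_polarSet {K : Set (Euc d)} (hK : Bornology.IsBounded K) :
    (0 : Euc d) ∈ interior (polarSet K) := by
  obtain ⟨R, hR, hKR⟩ := hK.subset_ball_lt 0 0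
  refine mem_interior.2
    ⟨ball 0 R⁻¹, fun z hz y hy => ?_, isOpen_ball, mem_ball_self (by positivity)⟩
  have hy : ‖y‖ < R := mem_ball_zero_iff.1 (hKR hy)
  have hz : ‖z‖ < R⁻¹ := mem_ball_zero_iff.1 hz
  calc ⟪y, z⟫ ≤ ‖y‖ * ‖z‖ := real_inner_le_norm y z
    _ ≤ R * R⁻¹ := mul_le_mul hy.le hz.le (norm_nonneg z) hR.le
    _ = 1 := mul_inv_cancel₀ hR.ne'

theorem mem_of_forall_mem_polarSet_inner_le_one {K : Set (Euc d)} (hKc : IsClosed K)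
    (hKv : Convex ℝ K) (h0 : (0 : Euc d) ∈ K) {p : Euc d}
    (hp : ∀ z ∈ polarSet K, ⟪z, p⟫ ≤ 1) : p ∈ K := by
  by_contra hpK
  obtain ⟨f, c, hfK, hfp⟩ := geometric_hahn_banach_closed_point hKv hKc hpK
  have hc : 0 < c := by simpa using hfK 0 h0
  set w := (InnerProductSpace.toDual ℝ (Euc d)).symm f
  have hw : ∀ y, ⟪w, y⟫ = f y := fun y => InnerProductSpace.toDual_symm_apply
  have hwP : c⁻¹ • w ∈ polarSet K := fun x hx => by
    rw [real_inner_smul_right, real_inner_comm, hw, inv_mul_le_iff₀ hc, mul_one]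
    exact (hfK x hx).le
  have := hp _ hwP
  rw [real_inner_smul_left, hw, inv_mul_le_iff₀ hc, mul_one] at this
  linarith

theorem inv_inner_smul_mem_frontier {K : Set (Euc d)} (hKc : IsClosed K) (hKv : Convex ℝ K)
    (h0 : (0 : Euc d) ∈ K) {u w : Euc d} (hu : u ∈ polarSet K)
    (hmax : IsMaxOn (⟪w, ·⟫) (polarSet K) u) (hpos : 0 < ⟪w, u⟫) :
    ⟪w, u⟫⁻¹ • w ∈ frontier K ∧ ⟪u, ⟪w, u⟫⁻¹ • w⟫ = 1 := by
  have hua : ⟪u, ⟪w, u⟫⁻¹ • w⟫ = 1 := by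
    rw [real_inner_smul_right, real_inner_comm w u, inv_mul_cancel₀ hpos.ne']
  refine ⟨mem_frontier_of_forall_inner_le (u := u) ?_ ?_ fun y hy => ?_, hua⟩
  · refine mem_of_forall_mem_polarSet_inner_le_one hKc hKv h0 fun z hz => ?_
    rw [real_inner_smul_right, real_inner_comm w z, inv_mul_le_iff₀ hpos, mul_one]
    exact hmax hz
  · rintro rfl
    simp at hpos
  · rw [hua, real_inner_comm]
    exact hu y hy

end Polar

theorem hasComplementaryChord_of_zero_mem_interior {d : ℕ} {K : Set (Euc d)}
    (hKc : IsCompact K) (hKv : Convex ℝ K) (h0 : (0 : Euc d) ∈ interior K) {n : Euc d}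
    (hn : n ≠ 0) :
    HasComplementaryChord K 0 n := by
  have hP0 := zero_mem_interior_polarSet hKc.isBounded
  have hPc : IsCompact (polarSet K) :=
    Metric.isCompact_of_isClosed_isBounded (isClosed_polarSet K) (isBounded_polarSet h0)
  obtain ⟨u, hu, v, hv, t, ht, huv, f, hf, hfu, hfv⟩ :=
    exists_chord_with_parallel_supports hPc (convex_polarSet K) ⟨0, hP0⟩ hn
  set w := (InnerProductSpace.toDual ℝ (Euc d)).symm f
  have hwf : (⟪w, ·⟫) = ⇑f := funext fun z => InnerProductSpace.toDual_symm_apply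
  have hw : w ≠ 0 := by simpa [w] using hf
  have hmax_u : IsMaxOn (⟪w, ·⟫) (polarSet K) u := hwf ▸ hfu
  have hmax_v : IsMaxOn (⟪-w, ·⟫) (polarSet K) v := by
    simpa only [inner_neg_left, hwf] using hfv.neg
  have hu_pos := inner_pos_of_isMaxOn hP0 hw hmax_u
  have hv_pos := inner_pos_of_isMaxOn hP0 (neg_ne_zero.2 hw) hmax_v
  obtain ⟨ha, hua⟩ := inv_inner_smul_mem_frontier hKc.isClosed hKv (interior_subset h0) hu
    hmax_u hu_pos
  obtain ⟨hb, hvb⟩ := inv_inner_smul_mem_frontier hKc.isClosed hKv (interior_subset h0) hv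
    hmax_v hv_pos
  refine ⟨_, ha, _, hb, zero_mem_openSegment_smul_neg (inv_pos.2 hu_pos) (inv_pos.2 hv_pos) w,
    u, v, ?_, ?_, fun y hy => ?_, fun y hy => ?_, ?_⟩
  · rintro rfl
    simp at hu_pos
  · rintro rfl
    simp at hv_pos
  · rw [hua, real_inner_comm]
    exact hu y hy
  · rw [hvb, real_inner_comm]
    exact hv y hy
  · rw [hua, hvb, inner_zero_right]
    exact inter_subset_orthogonal_or_parallel ht hn huv 1

theorem complementary_chord_exists_general {d : ℕ}
    (K : Set (Euc d)) (hK : IsConvexBody K)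
    (x : Euc d) (hx : x ∈ interior K) (n : Euc d) (hn : n ≠ 0) :
    ∃ a ∈ frontier K, ∃ b ∈ frontier K, x ∈ openSegment ℝ a b ∧
      ∃ u v : Euc d, u ≠ 0 ∧ v ≠ 0 ∧
        (∀ y ∈ K, ⟪u, y⟫ ≤ ⟪u, a⟫) ∧ (∀ y ∈ K, ⟪v, y⟫ ≤ ⟪v, b⟫) ∧
        ((¬ (∃ t : ℝ, v = t • u) ∧
            {y : Euc d | ⟪u, y⟫ = ⟪u, a⟫} ∩ {y : Euc d | ⟪v, y⟫ = ⟪v, b⟫} ⊆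
              {y : Euc d | ⟪n, y⟫ = ⟪n, x⟫}) ∨
          (∃ s t : ℝ, u = s • n ∧ v = t • n)) := by
  obtain ⟨hKc, hKv, -⟩ := hK
  have h0 : (0 : Euc d) ∈ interior (-x +ᵥ K) := by
    rw [interior_vadd]
    exact ⟨x, hx, neg_add_cancel x⟩
  have hchord : HasComplementaryChord (-x +ᵥ K) 0 n :=
    hasComplementaryChord_of_zero_mem_interior (hKc.image (continuous_const_vadd (-x)))
      (hKv.vadd (-x)) h0 hn
  have := hchord.vadd x
  rwa [vadd_neg_vadd, vadd_eq_add, add_zero] at this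

/-- Existence of a complementary chord. -/
theorem complementary_chord_exists {d : ℕ} (hd : 2 ≤ d)
    (K : Set (Euc d)) (hK : IsConvexBody K)
    (x : Euc d) (hx : x ∈ interior K) (n : Euc d) (hn : n ≠ 0) :
    ∃ a ∈ frontier K, ∃ b ∈ frontier K, x ∈ openSegment ℝ a b ∧
      ∃ u v : Euc d, u ≠ 0 ∧ v ≠ 0 ∧
        (∀ y ∈ K, ⟪u, y⟫ ≤ ⟪u, a⟫) ∧ (∀ y ∈ K, ⟪v, y⟫ ≤ ⟪v, b⟫) ∧
        ((¬ (∃ t : ℝ, v = t • u) ∧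
            {y : Euc d | ⟪u, y⟫ = ⟪u, a⟫} ∩ {y : Euc d | ⟪v, y⟫ = ⟪v, b⟫} ⊆
              {y : Euc d | ⟪n, y⟫ = ⟪n, x⟫}) ∨
          (∃ s t : ℝ, u = s • n ∧ v = t • n)) :=
  complementary_chord_exists_general K hK x hx n hn
end
end
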